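/- arXiv:1411.1982 — 2 statements merged into one kernel-verified Lean document; each statement's English description precedes it below -/
import Mathlib

section
/- If A is a graded algebra generated (as an algebra) by a graded vector subspace W, then the linear span of all supercommutators [A,A] equals the linear span of supercommutators [W,A] of elements of W with elements of A. -/
/-- The set of supercommutators `[x, y] = x*y - (-1)^{|x||y|} y*x` of homogeneous
elements `x ∈ X`, `y ∈ Y`. -/
def superCommSet {k B : Type} [Field k] [Ring B] [Algebra k B]
    (𝒜 : ℤ → Submodule k B) (X Y : Set B) : Set B :=
  {z | ∃ (p q : ℤ) (x y : B), x ∈ X ∧ y ∈ Y ∧ x ∈ 𝒜 p ∧ y ∈ 𝒜 q ∧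
    z = x * y - ((-1 : k) ^ (p * q)) • (y * x)}


section Aux

variable {k A : Type} [Field k] [Ring A] [Algebra k A]

lemma neg_one_zpow_sign (p p' q : ℤ) :
    ((-1:k) ^ (p * (p' + q))) * ((-1:k) ^ (p' * (q + p))) = (-1:k) ^ ((p + p') * q) := by
  have h1 : (-1:k) ≠ 0 := by norm_num
  rw [← zpow_add₀ h1,
    show p * (p' + q) + p' * (q + p) = 2 * (p * p') + (p + p') * q by ring,
    zpow_add₀ h1, Even.neg_one_zpow ⟨p * p', two_mul _⟩, one_mul]

/-- The submodule of "good" elements of degree `p`: those in `𝒜 p` whose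
supercommutator with every homogeneous element lies in `S`. -/
def goodSubmodule (𝒜 : ℤ → Submodule k A) (S : Submodule k A) (p : ℤ) :
    Submodule k A where
  carrier := {x | x ∈ 𝒜 p ∧ ∀ q (y : A), y ∈ 𝒜 q →
    x * y - ((-1 : k) ^ (p * q)) • (y * x) ∈ S}
  zero_mem' := ⟨zero_mem _, fun q y _ => by simp⟩
  add_mem' := by
    rintro a b ⟨ha1, ha2⟩ ⟨hb1, hb2⟩
    refine ⟨add_mem ha1 hb1, fun q y hy => ?_⟩
    have := add_mem (ha2 q y hy) (hb2 q y hy)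
    have heq : a * y - (-1:k) ^ (p*q) • (y * a) + (b * y - (-1:k) ^ (p*q) • (y * b))
        = (a + b) * y - (-1:k) ^ (p*q) • (y * (a + b)) := by
      simp only [mul_add, add_mul, smul_add]; abel
    rwa [heq] at this
  smul_mem' := by
    rintro c a ⟨ha1, ha2⟩
    refine ⟨Submodule.smul_mem _ _ ha1, fun q y hy => ?_⟩
    have := Submodule.smul_mem S c (ha2 q y hy)
    have heq : c • (a * y - (-1:k) ^ (p*q) • (y * a))
        = (c • a) * y - (-1:k) ^ (p*q) • (y * (c • a)) := by
      rw [smul_sub, smul_mul_assoc, mul_smul_comm, smul_comm]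
    rwa [heq] at this

lemma goodSubmodule_mul {𝒜 : ℤ → Submodule k A} [GradedAlgebra 𝒜] {S : Submodule k A}
    {p p' : ℤ} {a b : A} (ha : a ∈ goodSubmodule 𝒜 S p) (hb : b ∈ goodSubmodule 𝒜 S p') :
    a * b ∈ goodSubmodule 𝒜 S (p + p') := by
  obtain ⟨ha1, ha2⟩ := ha
  obtain ⟨hb1, hb2⟩ := hb
  refine ⟨SetLike.mul_mem_graded ha1 hb1, fun q y hy => ?_⟩
  have h1 := ha2 (p' + q) (b * y) (SetLike.mul_mem_graded hb1 hy)
  have h2 := hb2 (q + p) (y * a) (SetLike.mul_mem_graded hy ha1)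
  have := add_mem h1 (Submodule.smul_mem S ((-1:k) ^ (p * (p' + q))) h2)
  have heq : (a * (b * y) - (-1:k) ^ (p * (p' + q)) • (b * y * a))
      + (-1:k) ^ (p * (p' + q)) • (b * (y * a) - (-1:k) ^ (p' * (q + p)) • (y * a * b))
      = a * b * y - (-1:k) ^ ((p + p') * q) • (y * (a * b)) := by
    simp only [smul_sub, smul_smul, neg_one_zpow_sign, mul_assoc]
    abel
  rwa [heq] at this

end Aux

/-- If a ℤ-graded algebra `A` is generated (as an algebra) by a graded
linear subspace `W`, then the linear span `[A, A]` of all supercommutators of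
homogeneous elements equals the linear span `[W, A]` of supercommutators of
homogeneous elements of `W` with homogeneous elements of `A`. -/
theorem span_superComm_eq_of_generating {k A : Type} [Field k] [Ring A] [Algebra k A]
    (𝒜 : ℤ → Submodule k A) [GradedAlgebra 𝒜]
    (W : Submodule k A)
    (hWgraded : ∀ x ∈ W, ∀ i : ℤ, ((DirectSum.decompose 𝒜 x i : 𝒜 i) : A) ∈ W)
    (hWgen : Algebra.adjoin k (W : Set A) = ⊤) :
    Submodule.span k (superCommSet 𝒜 (Set.univ : Set A) (Set.univ : Set A)) =
      Submodule.span k (superCommSet 𝒜 (W : Set A) (Set.univ : Set A)) := by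
  set S : Submodule k A := Submodule.span k (superCommSet 𝒜 (W : Set A) (Set.univ : Set A))
    with hS
  set T : ℤ → Submodule k A := fun p => goodSubmodule 𝒜 S p with hT
  set M : Submodule k A := Submodule.span k (⋃ p : ℤ, (T p : Set A)) with hM
  -- T-membership of components of elements of M
  have hTmem : ∀ x ∈ M, ∀ p : ℤ, ((DirectSum.decompose 𝒜 x p : 𝒜 p) : A) ∈ T p := by
    intro x hx p
    induction hx using Submodule.span_induction with
    | mem g hg =>
      obtain ⟨_, ⟨p', rfl⟩, hg⟩ := hg
      by_cases hpp : p' = p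
      · subst hpp
        rwa [DirectSum.decompose_of_mem_same 𝒜 hg.1]
      · rw [DirectSum.decompose_of_mem_ne 𝒜 hg.1 hpp]
        exact zero_mem _
    | zero => simp only [DirectSum.decompose_zero]; exact zero_mem _
    | add a b _ _ ha hb =>
      rw [DirectSum.decompose_add]
      exact add_mem ha hb
    | smul c a _ ha =>
      rw [DirectSum.decompose_smul]
      exact Submodule.smul_mem _ _ ha
  -- M is closed under multiplication
  have hone : (1 : A) ∈ M := by
    refine Submodule.subset_span (Set.mem_iUnion.2 ⟨0, ?_⟩)
    refine ⟨SetLike.one_mem_graded 𝒜, fun q y hy => ?_⟩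
    simp
  have hmul : ∀ x y : A, x ∈ M → y ∈ M → x * y ∈ M := by
    intro x y hx hy
    have : M * M ≤ M := by
      rw [hM, Submodule.span_mul_span]
      refine Submodule.span_le.2 ?_
      rintro z hz
      rw [Set.mem_mul] at hz
      obtain ⟨a, ha, b, hb, rfl⟩ := hz
      obtain ⟨p, ha⟩ := Set.mem_iUnion.1 ha
      obtain ⟨p', hb⟩ := Set.mem_iUnion.1 hb
      exact Submodule.subset_span
        (Set.mem_iUnion.2 ⟨p + p', goodSubmodule_mul ha hb⟩)
    exact this (Submodule.mul_mem_mul hx hy)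
  -- M contains W
  have hWM : (W : Set A) ⊆ (M : Set A) := by
    intro w hw
    have : ∀ i : ℤ, ((DirectSum.decompose 𝒜 w i : 𝒜 i) : A) ∈ M := by
      intro i
      refine Submodule.subset_span (Set.mem_iUnion.2 ⟨i, ?_⟩)
      refine ⟨SetLike.coe_mem _, fun q y hy => ?_⟩
      refine Submodule.subset_span ?_
      exact ⟨i, q, _, y, hWgraded w hw i, trivial, SetLike.coe_mem _, hy, rfl⟩
    classical
    show w ∈ M
    rw [← DirectSum.sum_support_decompose 𝒜 w]
    exact Submodule.sum_mem _ fun i _ => this i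
  -- M = ⊤
  have hMtop : M = ⊤ := by
    have hle : Algebra.adjoin k (W : Set A) ≤ M.toSubalgebra hone hmul :=
      Algebra.adjoin_le hWM
    rw [hWgen] at hle
    exact top_le_iff.1 fun x _ => hle trivial
  refine le_antisymm ?_ (Submodule.span_mono ?_)
  · refine Submodule.span_le.2 ?_
    rintro _ ⟨p, q, x, y, -, -, hx, hy, rfl⟩
    have hxT : x ∈ T p := by
      have := hTmem x (hMtop ▸ Submodule.mem_top) p
      rwa [DirectSum.decompose_of_mem_same 𝒜 hx] at this
    exact hxT.2 q y hy
  · rintro _ ⟨p, q, x, y, hxW, -, hx, hy, rfl⟩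
    exact ⟨p, q, x, y, trivial, trivial, hx, hy, rfl⟩
end

section
/- In an algebra presented by generators x, y, z and the relations xy = x + y and x² + yz = z, the elements y and z commute: yz = zy. -/
open FreeAlgebra

/-- The two nonhomogeneous quadratic relations `xy = x + y` and `x² + yz = z`
on the free algebra `k⟨x, y, z⟩`. -/
def quadRel (k : Type) [Field k] :
    FreeAlgebra k (Fin 3) → FreeAlgebra k (Fin 3) → Prop := fun a b =>
  (a = ι k 0 * ι k 1 ∧ b = ι k 0 + ι k 1) ∨
  (a = ι k 0 ^ 2 + ι k 1 * ι k 2 ∧ b = ι k 2)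

/-- In the algebra `A = k⟨x, y, z⟩/(xy - x - y, x² + yz - z)`
presented by generators `x, y, z` and the relations `xy = x + y`, `x² + yz = z`,
the elements `y` and `z` commute: `yz = zy`. -/
theorem yz_comm_in_quotient (k : Type) [Field k] :
    RingQuot.mkRingHom (quadRel k) (ι k 1 * ι k 2) =
      RingQuot.mkRingHom (quadRel k) (ι k 2 * ι k 1) := by
  set f := RingQuot.mkRingHom (quadRel k) with hf
  set X := f (ι k 0) with hX
  set Y := f (ι k 1) with hY
  set Z := f (ι k 2) with hZ
  have h1 : X * Y = X + Y := by
    have := RingQuot.mkRingHom_rel (r := quadRel k)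
      (Or.inl ⟨rfl, rfl⟩ : quadRel k (ι k 0 * ι k 1) (ι k 0 + ι k 1))
    simpa [map_mul, map_add] using this
  have h2 : X ^ 2 + Y * Z = Z := by
    have := RingQuot.mkRingHom_rel (r := quadRel k)
      (Or.inr ⟨rfl, rfl⟩ : quadRel k (ι k 0 ^ 2 + ι k 1 * ι k 2) (ι k 2))
    simpa [map_mul, map_add, map_pow] using this
  have hyz : Y * Z = Z - X ^ 2 := eq_sub_of_add_eq' h2
  have h3 : X * (Y * Z) = X * Z + Y * Z := by
    calc X * (Y * Z) = (X * Y) * Z := (mul_assoc _ _ _).symm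
      _ = (X + Y) * Z := by rw [h1]
      _ = X * Z + Y * Z := add_mul _ _ _
  have h4 : X * Z + -(X ^ 3) = X * Z + (Z - X ^ 2) := by
    calc X * Z + -(X ^ 3) = X * (Z - X ^ 2) := by
          rw [mul_sub, ← sub_eq_add_neg]
          congr 1
          noncomm_ring
      _ = X * (Y * Z) := by rw [hyz]
      _ = X * Z + Y * Z := h3
      _ = X * Z + (Z - X ^ 2) := by rw [hyz]
  have h5 : -(X ^ 3) = Z - X ^ 2 := add_left_cancel h4
  have hZval : Z = X ^ 2 - X ^ 3 := by
    have h6 : Z = -(X ^ 3) + X ^ 2 := sub_eq_iff_eq_add.mp h5.symm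
    rw [h6]; abel
  have hx2y : X ^ 2 * Y = X ^ 2 + X + Y := by
    rw [pow_two, mul_assoc, h1, mul_add, h1]; abel
  have hx3y : X ^ 3 * Y = X ^ 3 + X ^ 2 + X + Y := by
    have e : X ^ 3 * Y = X * (X ^ 2 * Y) := by noncomm_ring
    rw [e, hx2y, mul_add, mul_add, h1]; noncomm_ring
  rw [map_mul, map_mul]
  show Y * Z = Z * Y
  rw [hyz, hZval, sub_mul, hx2y, hx3y]
  abel
end
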